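/- arXiv:0804.1935 — 2 statements merged into one kernel-verified Lean document; each statement's English description precedes it below -/
import Mathlib

section
/- For every subset B ⊆ [n−1], the number of permutations σ of [n+1] with σ₁ = 1 and D₃(σ) = B equals the number of permutations ω of [n] with alternating descent set equal to B. -/
open Finset
open scoped Classical

/-- entry of a permutation of `Fin n` at 0-indexed position `i` (0-based values). -/
def ent {n : ℕ} (σ : Equiv.Perm (Fin n)) (i : ℕ) : ℕ :=
  if h : i < n then (σ ⟨i, h⟩ : ℕ) else 0

/-- the triple `(a, b, c)` of distinct values, reduced to a permutation in `S₃`, is odd. -/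
def odd3 (a b c : ℕ) : Prop :=
  ((if b < a then 1 else 0) + (if c < a then 1 else 0) + (if c < b then 1 else 0)) % 2 = 1

instance (a b c : ℕ) : Decidable (odd3 a b c) := by
  unfold odd3; infer_instance

/-- 3-descent set, 0-indexed positions (position `i` here is paper position `i+1`). -/
def D3 {n : ℕ} (σ : Equiv.Perm (Fin n)) : Finset ℕ :=
  (Finset.range (n - 2)).filter (fun i => odd3 (ent σ i) (ent σ (i + 1)) (ent σ (i + 2)))

/-- alternating descent set, 0-indexed positions. -/
def altD {n : ℕ} (σ : Equiv.Perm (Fin n)) : Finset ℕ :=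
  (Finset.range (n - 1)).filter (fun i =>
    (Even i ∧ ent σ (i + 1) < ent σ i) ∨ (¬ Even i ∧ ent σ i < ent σ (i + 1)))

/-- number of up-down alternating permutations of `[n]` (the Euler number `Eₙ`). -/
noncomputable def EulerNum (n : ℕ) : ℕ :=
  ((Finset.univ : Finset (Equiv.Perm (Fin n))).filter (fun τ =>
    ∀ i ∈ Finset.range (n - 1),
      (Even i ∧ ent τ i < ent τ (i + 1)) ∨ (¬ Even i ∧ ent τ (i + 1) < ent τ i))).card

/-- `c³ᵢ(σ)`, 0-indexed: number of `j > i+1` with `σᵢ σᵢ₊₁ σⱼ` odd. -/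
def c3 {n : ℕ} (σ : Equiv.Perm (Fin n)) (i : ℕ) : ℕ :=
  ((Finset.range n).filter (fun j => i + 1 < j ∧ odd3 (ent σ i) (ent σ (i + 1)) (ent σ j))).card

/-- `ĉᵢ(σ)`, 0-indexed. -/
def chat {n : ℕ} (σ : Equiv.Perm (Fin n)) (i : ℕ) : ℕ :=
  ((Finset.range n).filter (fun j => i < j ∧
    ((Even i ∧ ent σ j < ent σ i) ∨ (¬ Even i ∧ ent σ i < ent σ j)))).card

/-- `i₃` of an arbitrary word `f 0, f 1, ..., f (m-1)`. -/
def i3f (m : ℕ) (f : ℕ → ℕ) : ℕ :=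
  ((Finset.range m ×ˢ Finset.range m).filter (fun p =>
    p.1 + 1 < p.2 ∧ odd3 (f p.1) (f (p.1 + 1)) (f p.2))).card

/-- the 3-inversion statistic `i₃`. -/
def i3 {n : ℕ} (σ : Equiv.Perm (Fin n)) : ℕ := i3f n (ent σ)

/-- the word `1*σ` (0-based values): `0, σ₀+1, σ₁+1, ...`. -/
def oneStar {n : ℕ} (σ : Equiv.Perm (Fin n)) : ℕ → ℕ :=
  fun i => if i = 0 then 0 else ent σ (i - 1) + 1

/-- number of alternating inversions `î(σ)`. -/
def altInv {n : ℕ} (σ : Equiv.Perm (Fin n)) : ℕ :=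
  ((Finset.range n ×ˢ Finset.range n).filter (fun p => p.1 < p.2 ∧
    ((Even p.1 ∧ ent σ p.2 < ent σ p.1) ∨ (¬ Even p.1 ∧ ent σ p.1 < ent σ p.2)))).card

/-- number of inversions of the word `f 0, ..., f (m-1)`. -/
def invf (m : ℕ) (f : ℕ → ℕ) : ℕ :=
  ((Finset.range m ×ˢ Finset.range m).filter (fun p => p.1 < p.2 ∧ f p.2 < f p.1)).card

/-- major index of the word `f 0, ..., f (m-1)` (descent at 0-indexed `i` contributes `i+1`). -/
def majf (m : ℕ) (f : ℕ → ℕ) : ℕ :=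
  ∑ i ∈ (Finset.range (m - 1)).filter (fun i => f (i + 1) < f i), (i + 1)

/-- `Â(m, r)`: number of permutations of `[m]` with `r - 1` alternating descents. -/
def Ahat (m r : ℕ) : ℕ :=
  ((Finset.univ : Finset (Equiv.Perm (Fin m))).filter (fun σ => (altD σ).card + 1 = r)).card

/-- down-up alternating: `σ₁ > σ₂ < σ₃ > ⋯`. -/
def DownUp {n : ℕ} (σ : Equiv.Perm (Fin n)) : Prop :=
  ∀ i ∈ Finset.range (n - 1),
    (Even i ∧ ent σ (i + 1) < ent σ i) ∨ (¬ Even i ∧ ent σ i < ent σ (i + 1))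

instance {n : ℕ} (σ : Equiv.Perm (Fin n)) : Decidable (DownUp σ) := by
  unfold DownUp; infer_instance

/-- up-down alternating: `σ₁ < σ₂ > σ₃ < ⋯`. -/
def UpDown {n : ℕ} (σ : Equiv.Perm (Fin n)) : Prop :=
  ∀ i ∈ Finset.range (n - 1),
    (Even i ∧ ent σ i < ent σ (i + 1)) ∨ (¬ Even i ∧ ent σ (i + 1) < ent σ i)

section Aux

lemma ent_lt {n : ℕ} (σ : Equiv.Perm (Fin n)) {i : ℕ} (h : i < n) : ent σ i < n := by
  unfold ent
  rw [dif_pos h]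
  exact (σ ⟨i, h⟩).isLt

lemma ent_ne {n : ℕ} (σ : Equiv.Perm (Fin n)) {i j : ℕ} (hi : i < n) (hj : j < n)
    (hij : i ≠ j) : ent σ i ≠ ent σ j := by
  unfold ent
  rw [dif_pos hi, dif_pos hj]
  intro h
  have h2 : σ ⟨i, hi⟩ = σ ⟨j, hj⟩ := Fin.ext h
  have h3 := σ.injective h2
  exact hij (by simpa using congrArg Fin.val h3)

lemma card_pos_val {n : ℕ} (ω : Equiv.Perm (Fin n)) (k : ℕ) (p : ℕ → Prop) [DecidablePred p] :
    ((Finset.range n).filter (fun j => k < j ∧ p (ent ω j))).card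
      = ((Finset.range n).filter (fun v => p v ∧ ∀ m, m ≤ k → ent ω m ≠ v)).card := by
  apply Finset.card_bij (fun j _ => ent ω j)
  · intro j hj
    simp only [Finset.mem_filter, Finset.mem_range] at hj ⊢
    obtain ⟨hjn, hkj, hpj⟩ := hj
    exact ⟨ent_lt ω hjn, hpj, fun m hm => ent_ne ω (by omega) hjn (by omega)⟩
  · intro j1 h1 j2 h2 he
    simp only [Finset.mem_filter, Finset.mem_range] at h1 h2
    by_contra hne
    exact ent_ne ω h1.1 h2.1 hne he
  · intro v hv
    simp only [Finset.mem_filter, Finset.mem_range] at hv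
    obtain ⟨hvn, hpv, hall⟩ := hv
    have hj : ((ω.symm ⟨v, hvn⟩ : Fin n) : ℕ) < n := (ω.symm ⟨v, hvn⟩).isLt
    have hev : ent ω ((ω.symm ⟨v, hvn⟩ : Fin n) : ℕ) = v := by
      unfold ent
      rw [dif_pos hj]
      simp
    refine ⟨((ω.symm ⟨v, hvn⟩ : Fin n) : ℕ), ?_, hev⟩
    simp only [Finset.mem_filter, Finset.mem_range]
    refine ⟨hj, ?_, by rw [hev]; exact hpv⟩
    by_contra hc
    exact hall _ (by omega) hev

lemma card_filter_lt {S : Finset ℕ} {p q : ℕ → Prop} [DecidablePred p] [DecidablePred q]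
    (hpq : ∀ u ∈ S, p u → q u) {x : ℕ} (hx : x ∈ S) (hqx : q x) (hpx : ¬ p x) :
    (S.filter p).card < (S.filter q).card := by
  apply Finset.card_lt_card
  rw [Finset.ssubset_iff_of_subset (by
    intro u hu
    simp only [Finset.mem_filter] at hu ⊢
    exact ⟨hu.1, hpq u hu.1 hu.2⟩)]
  exact ⟨x, by simp only [Finset.mem_filter]; exact ⟨hx, hqx⟩,
    by simp only [Finset.mem_filter]; tauto⟩

lemma odd3_lt {a b u : ℕ} (hba : b < a) (hua : u ≠ a) (hub : u ≠ b) :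
    odd3 a b u ↔ (u < b ∨ a < u) := by
  unfold odd3; split_ifs <;> simp_all <;> omega

lemma odd3_gt {a b u : ℕ} (hab : a < b) (hua : u ≠ a) (hub : u ≠ b) :
    odd3 a b u ↔ (a < u ∧ u < b) := by
  unfold odd3; split_ifs <;> simp_all <;> omega

lemma odd3_total {a b c u : ℕ} (h1 : a ≠ b) (h2 : a ≠ c) (h3 : a ≠ u) (h4 : b ≠ c)
    (h5 : b ≠ u) (h6 : c ≠ u) (h : odd3 a b c) : odd3 a b u ∨ odd3 b c u := by
  unfold odd3 at *; split_ifs at * <;> omega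

lemma odd3_not_both {a b c u : ℕ} (h1 : a ≠ b) (h2 : a ≠ c) (h3 : a ≠ u) (h4 : b ≠ c)
    (h5 : b ≠ u) (h6 : c ≠ u) (h : ¬ odd3 a b c) (ha : odd3 a b u) (hb : odd3 b c u) :
    False := by
  unfold odd3 at *; split_ifs at * <;> omega

end Aux
section Aux2

lemma chat_val_even {n : ℕ} (ω : Equiv.Perm (Fin n)) {i : ℕ} (hi : Even i) :
    chat ω i = ((Finset.range n).filter
      (fun v => v < ent ω i ∧ ∀ m, m ≤ i → ent ω m ≠ v)).card := by
  unfold chat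
  have h1 := card_pos_val ω i (fun v => v < ent ω i)
  rw [← h1]
  congr 1
  apply Finset.filter_congr
  intro j _
  simp [hi]

lemma chat_val_odd {n : ℕ} (ω : Equiv.Perm (Fin n)) {i : ℕ} (hi : ¬ Even i) :
    chat ω i = ((Finset.range n).filter
      (fun v => ent ω i < v ∧ ∀ m, m ≤ i → ent ω m ≠ v)).card := by
  unfold chat
  have h1 := card_pos_val ω i (fun v => ent ω i < v)
  rw [← h1]
  congr 1
  apply Finset.filter_congr
  intro j _
  simp [hi]

lemma chat_inj {n : ℕ} (ω ω' : Equiv.Perm (Fin n))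
    (h : ∀ i, i < n - 1 → chat ω i = chat ω' i) : ω = ω' := by
  have key : ∀ i, i < n - 1 → (∀ m, m < i → ent ω m = ent ω' m) → ent ω i = ent ω' i := by
    intro i hi hpre
    by_contra hne
    have han : ent ω i < n := ent_lt ω (by omega)
    have han' : ent ω' i < n := ent_lt ω' (by omega)
    set a := ent ω i with ha
    set a' := ent ω' i with ha'
    set SS := (Finset.range n).filter (fun v => ∀ m, m < i → ent ω m ≠ v) with hSS
    have hmema : a ∈ SS := by
      simp only [hSS, Finset.mem_filter, Finset.mem_range]
      exact ⟨han, fun m hm => ent_ne ω (by omega) (by omega) (by omega)⟩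
    have hmema' : a' ∈ SS := by
      simp only [hSS, Finset.mem_filter, Finset.mem_range]
      refine ⟨han', fun m hm => ?_⟩
      rw [hpre m hm]
      exact ent_ne ω' (by omega) (by omega) (by omega)
    by_cases he : Even i
    · have e1 : chat ω i = (SS.filter (fun v => v < a)).card := by
        rw [chat_val_even ω he, hSS, Finset.filter_filter]
        congr 1
        apply Finset.filter_congr
        intro v _
        constructor
        · rintro ⟨hv, hall⟩
          exact ⟨fun m hm => hall m (by omega), hv⟩
        · rintro ⟨hall, hv⟩
          refine ⟨hv, fun m hm => ?_⟩
          rcases Nat.lt_or_ge m i with h1 | h1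
          · exact hall m h1
          · have : m = i := by omega
            rw [this, ← ha]; omega
      have e2 : chat ω' i = (SS.filter (fun v => v < a')).card := by
        rw [chat_val_even ω' he, hSS, Finset.filter_filter]
        congr 1
        apply Finset.filter_congr
        intro v _
        constructor
        · rintro ⟨hv, hall⟩
          exact ⟨fun m hm => by rw [hpre m hm]; exact hall m (by omega), hv⟩
        · rintro ⟨hall, hv⟩
          refine ⟨hv, fun m hm => ?_⟩
          rcases Nat.lt_or_ge m i with h1 | h1
          · rw [← hpre m h1]; exact hall m h1
          · have : m = i := by omega
            rw [this, ← ha']; omega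
      have hchat := h i hi
      rw [e1, e2] at hchat
      rcases Ne.lt_or_gt hne with hlt | hlt
      · have := card_filter_lt (S := SS) (p := fun v => v < a) (q := fun v => v < a')
          (fun u _ hu => by omega) hmema (by omega) (by omega)
        exact absurd hchat (Nat.ne_of_lt this)
      · have := card_filter_lt (S := SS) (p := fun v => v < a') (q := fun v => v < a)
          (fun u _ hu => by omega) hmema' (by omega) (by omega)
        exact absurd hchat.symm (Nat.ne_of_lt this)
    · have ho' : ¬ Even i := he
      have e1 : chat ω i = (SS.filter (fun v => a < v)).card := by
        rw [chat_val_odd ω ho', hSS, Finset.filter_filter]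
        congr 1
        apply Finset.filter_congr
        intro v _
        constructor
        · rintro ⟨hv, hall⟩
          exact ⟨fun m hm => hall m (by omega), hv⟩
        · rintro ⟨hall, hv⟩
          refine ⟨hv, fun m hm => ?_⟩
          rcases Nat.lt_or_ge m i with h1 | h1
          · exact hall m h1
          · have : m = i := by omega
            rw [this, ← ha]; omega
      have e2 : chat ω' i = (SS.filter (fun v => a' < v)).card := by
        rw [chat_val_odd ω' ho', hSS, Finset.filter_filter]
        congr 1
        apply Finset.filter_congr
        intro v _
        constructor
        · rintro ⟨hv, hall⟩
          exact ⟨fun m hm => by rw [hpre m hm]; exact hall m (by omega), hv⟩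
        · rintro ⟨hall, hv⟩
          refine ⟨hv, fun m hm => ?_⟩
          rcases Nat.lt_or_ge m i with h1 | h1
          · rw [← hpre m h1]; exact hall m h1
          · have : m = i := by omega
            rw [this, ← ha']; omega
      have hchat := h i hi
      rw [e1, e2] at hchat
      rcases Ne.lt_or_gt hne with hlt | hlt
      · have := card_filter_lt (S := SS) (p := fun v => a' < v) (q := fun v => a < v)
          (fun u _ hu => by omega) hmema' (by omega) (by omega)
        exact absurd hchat.symm (Nat.ne_of_lt this)
      · have := card_filter_lt (S := SS) (p := fun v => a < v) (q := fun v => a' < v)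
          (fun u _ hu => by omega) hmema (by omega) (by omega)
        exact absurd hchat (Nat.ne_of_lt this)
  have all : ∀ i, i < n - 1 → ent ω i = ent ω' i := by
    intro i
    induction i using Nat.strong_induction_on with
    | _ i ih =>
      intro hi
      exact key i hi (fun m hm => ih m hm (by omega))
  have allF : ∀ x : Fin n, (x : ℕ) < n - 1 → ω x = ω' x := by
    intro x hx
    have := all x hx
    unfold ent at this
    rw [dif_pos x.isLt, dif_pos x.isLt] at this
    simp only [Fin.eta] at this
    exact Fin.ext this
  apply Equiv.ext
  intro x
  by_cases hx : (x : ℕ) < n - 1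
  · exact allF x hx
  · have hn1 : (x : ℕ) = n - 1 := by have := x.isLt; omega
    by_contra hne
    set y := ω'.symm (ω x) with hy
    have hyx : y ≠ x := by
      intro he
      apply hne
      rw [← Equiv.apply_symm_apply ω' (ω x), ← hy, he]
    have hyv : (y : ℕ) < n - 1 := by
      have h1 := y.isLt
      have h2 : (y : ℕ) ≠ n - 1 := by
        intro hc
        exact hyx (Fin.ext (by omega))
      omega
    have := allF y hyv
    have h2 : ω' y = ω x := Equiv.apply_symm_apply ω' (ω x)
    exact hyx (ω.injective (this.trans h2))

end Aux2
section Aux3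

lemma c3_val {n : ℕ} (σ : Equiv.Perm (Fin n)) (i : ℕ) :
    c3 σ i = ((Finset.range n).filter
      (fun v => odd3 (ent σ i) (ent σ (i+1)) v ∧ ∀ m, m ≤ i + 1 → ent σ m ≠ v)).card := by
  unfold c3
  have h1 := card_pos_val σ (i+1) (fun v => odd3 (ent σ i) (ent σ (i+1)) v)
  rw [← h1]

lemma core_lt {S : Finset ℕ} {a b b' : ℕ} (haS : a ∉ S) (hb : b ∈ S) (hb' : b' ∈ S)
    (hab : a ≠ b) (hab' : a ≠ b') (hlt : b < b') :
    (S.filter (fun u => u ≠ b ∧ odd3 a b u)).card ≠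
      (S.filter (fun u => u ≠ b' ∧ odd3 a b' u)).card := by
  have huA : ∀ u ∈ S, u ≠ a := fun u hu he => haS (he ▸ hu)
  by_cases h1 : a < b
  · -- a < b < b' : both gt-form
    have e1 : S.filter (fun u => u ≠ b ∧ odd3 a b u) = S.filter (fun u => a < u ∧ u < b) := by
      apply Finset.filter_congr
      intro u hu
      by_cases hub : u = b
      · subst hub; simp <;> omega
      · rw [odd3_gt h1 (huA u hu) hub]; constructor <;> (intros; tauto)
    have e2 : S.filter (fun u => u ≠ b' ∧ odd3 a b' u) = S.filter (fun u => a < u ∧ u < b') := by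
      apply Finset.filter_congr
      intro u hu
      by_cases hub : u = b'
      · subst hub; simp <;> omega
      · rw [odd3_gt (by omega) (huA u hu) hub]; constructor <;> (intros; tauto)
    rw [e1, e2]
    have := card_filter_lt (S := S) (p := fun u => a < u ∧ u < b) (q := fun u => a < u ∧ u < b')
      (fun u _ hu => by omega) hb (by omega) (by omega)
    omega
  · have hba : b < a := by omega
    have e1 : S.filter (fun u => u ≠ b ∧ odd3 a b u) = S.filter (fun u => u < b ∨ a < u) := by
      apply Finset.filter_congr
      intro u hu
      by_cases hub : u = b
      · subst hub; simp <;> omega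
      · rw [odd3_lt hba (huA u hu) hub]; constructor <;> (intros ; tauto)
    rw [e1]
    by_cases h2 : a < b'
    · -- b < a < b'
      have e2 : S.filter (fun u => u ≠ b' ∧ odd3 a b' u) = S.filter (fun u => a < u ∧ u < b') := by
        apply Finset.filter_congr
        intro u hu
        by_cases hub : u = b'
        · subst hub; simp <;> omega
        · rw [odd3_gt h2 (huA u hu) hub]; constructor <;> (intros; tauto)
      rw [e2]
      have := card_filter_lt (S := S) (p := fun u => a < u ∧ u < b') (q := fun u => u < b ∨ a < u)
        (fun u _ hu => by omega) hb' (by omega) (by omega)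
      omega
    · -- b < b' < a
      have hba' : b' < a := by omega
      have e2 : S.filter (fun u => u ≠ b' ∧ odd3 a b' u) = S.filter (fun u => u < b' ∨ a < u) := by
        apply Finset.filter_congr
        intro u hu
        by_cases hub : u = b'
        · subst hub; simp <;> omega
        · rw [odd3_lt hba' (huA u hu) hub]; constructor <;> (intros; tauto)
      rw [e2]
      have := card_filter_lt (S := S) (p := fun u => u < b ∨ a < u) (q := fun u => u < b' ∨ a < u)
        (fun u _ hu => by omega) hb (by omega) (by omega)
      omega

lemma ent_zero {n : ℕ} (σ : Equiv.Perm (Fin (n+1))) (h0 : σ 0 = 0) : ent σ 0 = 0 := by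
  unfold ent
  rw [dif_pos (Nat.succ_pos n)]
  have : (⟨0, Nat.succ_pos n⟩ : Fin (n+1)) = 0 := rfl
  rw [this, h0]
  rfl

lemma c3_inj {n : ℕ} (σ σ' : Equiv.Perm (Fin (n+1))) (h0 : σ 0 = 0) (h0' : σ' 0 = 0)
    (h : ∀ i, i < n - 1 → c3 σ i = c3 σ' i) : σ = σ' := by
  have all : ∀ i, i < n → ent σ i = ent σ' i := by
    intro i
    induction i using Nat.strong_induction_on with
    | _ i ih =>
      intro hi
      match i, hi with
      | 0, _ => rw [ent_zero σ h0, ent_zero σ' h0']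
      | (m+1), hm1 =>
        have hpre : ∀ l, l ≤ m → ent σ l = ent σ' l := fun l hl => ih l (by omega) (by omega)
        by_contra hne
        have hmn : m < n - 1 := by omega
        set a := ent σ m with ha
        set b := ent σ (m+1) with hb
        set b' := ent σ' (m+1) with hb'
        have ha' : ent σ' m = a := (hpre m le_rfl).symm
        have hbn : b < n + 1 := ent_lt σ (by omega)
        have hbn' : b' < n + 1 := ent_lt σ' (by omega)
        set SS := (Finset.range (n+1)).filter (fun v => ∀ l, l ≤ m → ent σ l ≠ v) with hSS
        have haS : a ∉ SS := by
          simp only [hSS, Finset.mem_filter, Finset.mem_range]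
          intro hc
          exact hc.2 m le_rfl rfl
        have hbS : b ∈ SS := by
          simp only [hSS, Finset.mem_filter, Finset.mem_range]
          exact ⟨hbn, fun l hl => ent_ne σ (by omega) (by omega) (by omega)⟩
        have hbS' : b' ∈ SS := by
          simp only [hSS, Finset.mem_filter, Finset.mem_range]
          refine ⟨hbn', fun l hl => ?_⟩
          rw [hpre l hl]
          exact ent_ne σ' (by omega) (by omega) (by omega)
        have hab : a ≠ b := ent_ne σ (by omega) (by omega) (by omega)
        have hab' : a ≠ b' := by
          rw [← ha']
          exact ent_ne σ' (by omega) (by omega) (by omega)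
        have e1 : c3 σ m = (SS.filter (fun u => u ≠ b ∧ odd3 a b u)).card := by
          rw [c3_val σ m, hSS, Finset.filter_filter]
          congr 1
          apply Finset.filter_congr
          intro v _
          constructor
          · rintro ⟨hv, hall⟩
            refine ⟨fun l hl => hall l (by omega), ?_, hv⟩
            exact fun hc => hall (m+1) le_rfl (by rw [← hb, hc])
          · rintro ⟨hall, hvb, hv⟩
            refine ⟨hv, fun l hl => ?_⟩
            rcases Nat.lt_or_ge l (m+1) with h1 | h1
            · exact hall l (by omega)
            · have : l = m + 1 := by omega
              rw [this, ← hb]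
              exact fun hc => hvb hc.symm
        have e2 : c3 σ' m = (SS.filter (fun u => u ≠ b' ∧ odd3 a b' u)).card := by
          rw [c3_val σ' m, hSS, Finset.filter_filter, ha']
          congr 1
          apply Finset.filter_congr
          intro v _
          constructor
          · rintro ⟨hv, hall⟩
            refine ⟨fun l hl => by rw [hpre l hl]; exact hall l (by omega), ?_, hv⟩
            exact fun hc => hall (m+1) le_rfl (by rw [← hb', hc])
          · rintro ⟨hall, hvb, hv⟩
            refine ⟨hv, fun l hl => ?_⟩
            rcases Nat.lt_or_ge l (m+1) with h1 | h1
            · rw [← hpre l (by omega)]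
              exact hall l (by omega)
            · have : l = m + 1 := by omega
              rw [this, ← hb']
              exact fun hc => hvb hc.symm
        have hc3 := h m hmn
        rw [e1, e2] at hc3
        rcases Ne.lt_or_gt hne with hlt | hlt
        · exact core_lt haS hbS hbS' hab hab' hlt hc3
        · exact (core_lt haS hbS' hbS hab' hab hlt) hc3.symm
  have allF : ∀ x : Fin (n+1), (x : ℕ) < n → σ x = σ' x := by
    intro x hx
    have := all x hx
    unfold ent at this
    rw [dif_pos x.isLt, dif_pos x.isLt] at this
    simp only [Fin.eta] at this
    exact Fin.ext this
  apply Equiv.ext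
  intro x
  by_cases hx : (x : ℕ) < n
  · exact allF x hx
  · have hn1 : (x : ℕ) = n := by have := x.isLt; omega
    by_contra hne
    set y := σ'.symm (σ x) with hy
    have hyx : y ≠ x := by
      intro he
      apply hne
      rw [← Equiv.apply_symm_apply σ' (σ x), ← hy, he]
    have hyv : (y : ℕ) < n := by
      have h1 := y.isLt
      have h2 : (y : ℕ) ≠ n := fun hc => hyx (Fin.ext (by omega))
      omega
    have h3 := allF y hyv
    have h2 : σ' y = σ x := Equiv.apply_symm_apply σ' (σ x)
    exact hyx (σ.injective (h3.trans h2))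

end Aux3
section Aux4

lemma c3_le {n : ℕ} (σ : Equiv.Perm (Fin (n+1))) (i : ℕ) : c3 σ i ≤ n - 1 - i := by
  unfold c3
  have hsub : (Finset.range (n+1)).filter
      (fun j => i + 1 < j ∧ odd3 (ent σ i) (ent σ (i+1)) (ent σ j)) ⊆
      Finset.Ico (i+2) (n+1) := by
    intro j hj
    simp only [Finset.mem_filter, Finset.mem_range, Finset.mem_Ico] at hj ⊢
    omega
  have := Finset.card_le_card hsub
  rw [Nat.card_Ico] at this
  omega

lemma chat_le {n : ℕ} (ω : Equiv.Perm (Fin n)) (i : ℕ) : chat ω i ≤ n - 1 - i := by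
  unfold chat
  have hsub : (Finset.range n).filter (fun j => i < j ∧
      ((Even i ∧ ent ω j < ent ω i) ∨ (¬ Even i ∧ ent ω i < ent ω j))) ⊆
      Finset.Ico (i+1) n := by
    intro j hj
    simp only [Finset.mem_filter, Finset.mem_range, Finset.mem_Ico] at hj ⊢
    omega
  have := Finset.card_le_card hsub
  rw [Nat.card_Ico] at this
  omega

lemma c3_last {n : ℕ} (σ : Equiv.Perm (Fin (n+1))) : c3 σ (n - 1) = 0 := by
  unfold c3
  rw [Finset.card_eq_zero, Finset.filter_eq_empty_iff]
  intro j hj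
  rw [Finset.mem_range] at hj
  rintro ⟨h1, -⟩
  omega

lemma chat_last {n : ℕ} (ω : Equiv.Perm (Fin n)) : chat ω (n - 1) = 0 := by
  unfold chat
  rw [Finset.card_eq_zero, Finset.filter_eq_empty_iff]
  intro j hj
  rw [Finset.mem_range] at hj
  rintro ⟨h1, -⟩
  omega

lemma c3_rule {n : ℕ} (σ : Equiv.Perm (Fin (n+1))) {i : ℕ} (hi : i < n - 1) :
    odd3 (ent σ i) (ent σ (i+1)) (ent σ (i+2)) ↔ n - 1 - i ≤ c3 σ i + c3 σ (i+1) := by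
  have hi2 : i + 2 < n + 1 := by omega
  set F1 := (Finset.range (n+1)).filter
      (fun j => i + 1 < j ∧ odd3 (ent σ i) (ent σ (i+1)) (ent σ j)) with hF1
  set F2 := (Finset.range (n+1)).filter
      (fun j => i + 1 + 1 < j ∧ odd3 (ent σ (i+1)) (ent σ (i+1+1)) (ent σ j)) with hF2
  have hc : c3 σ i + c3 σ (i+1) = F1.card + F2.card := rfl
  have hd : ∀ j, i + 2 < j → j < n + 1 →
      (ent σ i ≠ ent σ (i+1) ∧ ent σ i ≠ ent σ (i+2) ∧ ent σ i ≠ ent σ j ∧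
       ent σ (i+1) ≠ ent σ (i+2) ∧ ent σ (i+1) ≠ ent σ j ∧ ent σ (i+2) ≠ ent σ j) := by
    intro j h1 h2
    exact ⟨ent_ne σ (by omega) (by omega) (by omega), ent_ne σ (by omega) (by omega) (by omega),
      ent_ne σ (by omega) (by omega) (by omega), ent_ne σ (by omega) (by omega) (by omega),
      ent_ne σ (by omega) (by omega) (by omega), ent_ne σ (by omega) (by omega) (by omega)⟩
  constructor
  · intro hodd
    have hsub : Finset.Ico (i+2) (n+1) ⊆ F1 ∪ F2 := by
      intro j hj
      rw [Finset.mem_Ico] at hj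
      rcases eq_or_lt_of_le hj.1 with he | hlt
      · apply Finset.mem_union_left
        rw [hF1, Finset.mem_filter, Finset.mem_range]
        exact ⟨hj.2, by omega, by rw [← he]; exact hodd⟩
      · obtain ⟨d1, d2, d3, d4, d5, d6⟩ := hd j hlt hj.2
        rcases odd3_total d1 d2 d3 d4 d5 d6 hodd with h | h
        · apply Finset.mem_union_left
          rw [hF1, Finset.mem_filter, Finset.mem_range]
          exact ⟨hj.2, by omega, h⟩
        · apply Finset.mem_union_right
          rw [hF2, Finset.mem_filter, Finset.mem_range]
          exact ⟨hj.2, by omega, by show odd3 _ (ent σ (i+1+1)) _; exact h⟩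
    have h1 := Finset.card_le_card hsub
    rw [Nat.card_Ico] at h1
    have h2 := Finset.card_union_le F1 F2
    omega
  · intro hle
    by_contra hodd
    have hdisj : Disjoint F1 F2 := by
      rw [Finset.disjoint_left]
      intro j hj1 hj2
      rw [hF1, Finset.mem_filter, Finset.mem_range] at hj1
      rw [hF2, Finset.mem_filter, Finset.mem_range] at hj2
      obtain ⟨d1, d2, d3, d4, d5, d6⟩ := hd j (by omega) hj1.1
      exact odd3_not_both d1 d2 d3 d4 d5 d6 hodd hj1.2.2 hj2.2.2
    have hsub : F1 ∪ F2 ⊆ Finset.Ico (i+3) (n+1) := by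
      intro j hj
      rcases Finset.mem_union.mp hj with h | h
      · rw [hF1, Finset.mem_filter, Finset.mem_range] at h
        rw [Finset.mem_Ico]
        refine ⟨?_, h.1⟩
        by_contra hc
        have hji : j = i + 2 := by omega
        rw [hji] at h
        exact hodd h.2.2
      · rw [hF2, Finset.mem_filter, Finset.mem_range] at h
        rw [Finset.mem_Ico]
        exact ⟨by omega, h.1⟩
    have h1 := Finset.card_le_card hsub
    rw [Finset.card_union_of_disjoint hdisj, Nat.card_Ico] at h1
    omega

lemma chat_rule {n : ℕ} (ω : Equiv.Perm (Fin n)) {i : ℕ} (hi : i < n - 1) :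
    ((Even i ∧ ent ω (i+1) < ent ω i) ∨ (¬ Even i ∧ ent ω i < ent ω (i+1))) ↔
      n - 1 - i ≤ chat ω i + chat ω (i+1) := by
  have hi1 : i + 1 < n := by omega
  set G1 := (Finset.range n).filter (fun j => i < j ∧
      ((Even i ∧ ent ω j < ent ω i) ∨ (¬ Even i ∧ ent ω i < ent ω j))) with hG1
  set G2 := (Finset.range n).filter (fun j => i + 1 < j ∧
      ((Even (i+1) ∧ ent ω j < ent ω (i+1)) ∨ (¬ Even (i+1) ∧ ent ω (i+1) < ent ω j))) with hG2
  have hc : chat ω i + chat ω (i+1) = G1.card + G2.card := rfl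
  have hne01 : ent ω i ≠ ent ω (i+1) := ent_ne ω (by omega) (by omega) (by omega)
  have hnej : ∀ j, i + 1 < j → j < n → ent ω j ≠ ent ω i ∧ ent ω j ≠ ent ω (i+1) := by
    intro j h1 h2
    exact ⟨ent_ne ω (by omega) (by omega) (by omega), ent_ne ω (by omega) (by omega) (by omega)⟩
  have hpar : Even (i+1) ↔ ¬ Even i := Nat.even_add_one
  constructor
  · intro hodd
    have hsub : Finset.Ico (i+1) n ⊆ G1 ∪ G2 := by
      intro j hj
      rw [Finset.mem_Ico] at hj
      rcases eq_or_lt_of_le hj.1 with he | hlt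
      · apply Finset.mem_union_left
        rw [hG1, Finset.mem_filter, Finset.mem_range]
        refine ⟨hj.2, by omega, ?_⟩
        rw [← he]
        exact hodd
      · obtain ⟨d1, d2⟩ := hnej j hlt hj.2
        by_cases he : Even i
        · have hd : ent ω (i+1) < ent ω i := by tauto
          rcases Nat.lt_or_ge (ent ω j) (ent ω i) with h | h
          · apply Finset.mem_union_left
            rw [hG1, Finset.mem_filter, Finset.mem_range]
            exact ⟨hj.2, by omega, Or.inl ⟨he, h⟩⟩
          · apply Finset.mem_union_right
            rw [hG2, Finset.mem_filter, Finset.mem_range]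
            exact ⟨hj.2, by omega, Or.inr ⟨by simp [hpar, he], by omega⟩⟩
        · have hd : ent ω i < ent ω (i+1) := by tauto
          rcases Nat.lt_or_ge (ent ω i) (ent ω j) with h | h
          · apply Finset.mem_union_left
            rw [hG1, Finset.mem_filter, Finset.mem_range]
            exact ⟨hj.2, by omega, Or.inr ⟨he, h⟩⟩
          · apply Finset.mem_union_right
            rw [hG2, Finset.mem_filter, Finset.mem_range]
            refine ⟨hj.2, by omega, Or.inl ⟨by simp [hpar, he], by omega⟩⟩
    have h1 := Finset.card_le_card hsub
    rw [Nat.card_Ico] at h1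
    have h2 := Finset.card_union_le G1 G2
    omega
  · intro hle
    by_contra hodd
    push_neg at hodd
    have hdisj : Disjoint G1 G2 := by
      rw [Finset.disjoint_left]
      intro j hj1 hj2
      rw [hG1, Finset.mem_filter, Finset.mem_range] at hj1
      rw [hG2, Finset.mem_filter, Finset.mem_range] at hj2
      by_cases he : Even i
      · have h1 : ent ω j < ent ω i := by tauto
        have h2 : ¬ Even (i+1) := by simp [hpar, he]
        have h3 : ent ω (i+1) < ent ω j := by tauto
        have h4 := hodd.1 he
        omega
      · have h1 : ent ω i < ent ω j := by tauto
        have h2 : Even (i+1) := by simp [hpar, he]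
        have h3 : ent ω j < ent ω (i+1) := by tauto
        have h4 := hodd.2 he
        omega
    have hsub : G1 ∪ G2 ⊆ Finset.Ico (i+2) n := by
      intro j hj
      rw [Finset.mem_Ico]
      rcases Finset.mem_union.mp hj with h | h
      · rw [hG1, Finset.mem_filter, Finset.mem_range] at h
        refine ⟨?_, h.1⟩
        by_contra hc
        have hji : j = i + 1 := by omega
        rw [hji] at h
        by_cases he : Even i
        · have := hodd.1 he
          have : ent ω (i+1) < ent ω i := by tauto
          omega
        · have := hodd.2 he
          have : ent ω i < ent ω (i+1) := by tauto
          omega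
      · rw [hG2, Finset.mem_filter, Finset.mem_range] at h
        exact ⟨by omega, h.1⟩
    have h1 := Finset.card_le_card hsub
    rw [Finset.card_union_of_disjoint hdisj, Nat.card_Ico] at h1
    omega

end Aux4
section Aux5

def codeC3 {n : ℕ} (σ : Equiv.Perm (Fin (n+1))) : ∀ i : Fin (n-1), Fin (n - (i:ℕ)) :=
  fun i => ⟨c3 σ (i:ℕ), by have h1 := c3_le σ (i:ℕ); have h2 := i.isLt; omega⟩

def codeChat {n : ℕ} (ω : Equiv.Perm (Fin n)) : ∀ i : Fin (n-1), Fin (n - (i:ℕ)) :=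
  fun i => ⟨chat ω (i:ℕ), by have h1 := chat_le ω (i:ℕ); have h2 := i.isLt; omega⟩

lemma prod_desc (n : ℕ) : ∏ j ∈ Finset.range (n-1), (n - j) = n.factorial := by
  induction n with
  | zero => simp
  | succ m ih =>
    rcases m with _ | k
    · simp
    · have hr : (k + 1 + 1 : ℕ) - 1 = k + 1 := rfl
      rw [hr, Finset.prod_range_succ']
      have he : ∀ j ∈ Finset.range k, (k + 2 : ℕ) - (j+1) = (k+1) - j := fun j _ => by omega
      rw [Finset.prod_congr rfl he]
      have hr2 : (k + 1 + 1 : ℕ) = k + 2 := rfl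
      have ih' : ∏ j ∈ Finset.range k, ((k+1) - j) = (k+1).factorial := by
        have : (k + 1 : ℕ) - 1 = k := rfl
        rw [← this]; exact ih
      rw [ih']
      simp [Nat.factorial_succ]
      ring

lemma card_pi_fact (n : ℕ) :
    Fintype.card (∀ i : Fin (n-1), Fin (n - (i:ℕ))) = n.factorial := by
  rw [Fintype.card_pi]
  simp only [Fintype.card_fin]
  rw [← prod_desc n]
  exact Fin.prod_univ_eq_prod_range (fun j => n - j) (n-1)

lemma card_fix0 (n : ℕ) :
    ((Finset.univ : Finset (Equiv.Perm (Fin (n+1)))).filter (fun σ => σ 0 = 0)).card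
      = n.factorial := by
  have h1 : Fintype.card (Equiv.Perm (Fin n)) = n.factorial := by
    simp [Fintype.card_perm]
  rw [← h1, ← Finset.card_univ]
  symm
  apply Finset.card_bij (fun (π : Equiv.Perm (Fin n)) _ => Equiv.Perm.decomposeFin.symm (0, π))
  · intro π _
    simp only [Finset.mem_filter, Finset.mem_univ, true_and]
    exact Equiv.Perm.decomposeFin_symm_apply_zero 0 π
  · intro π1 _ π2 _ he
    have := Equiv.Perm.decomposeFin.symm.injective he
    exact (Prod.mk.injEq _ _ _ _).mp this |>.2
  · intro σ hσ
    simp only [Finset.mem_filter, Finset.mem_univ, true_and] at hσ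
    refine ⟨(Equiv.Perm.decomposeFin σ).2, Finset.mem_univ _, ?_⟩
    have h2 : Equiv.Perm.decomposeFin.symm (Equiv.Perm.decomposeFin σ) = σ :=
      Equiv.symm_apply_apply _ _
    have h3 : (Equiv.Perm.decomposeFin σ).1 = 0 := by
      have h4 := Equiv.Perm.decomposeFin_symm_apply_zero
        (Equiv.Perm.decomposeFin σ).1 (Equiv.Perm.decomposeFin σ).2
      rw [Prod.mk.eta, h2] at h4
      rw [← h4, hσ]
    rw [← h3, Prod.mk.eta, h2]

end Aux5
section Aux6

def codeCond (n : ℕ) (B : Finset ℕ) (f : ∀ i : Fin (n-1), Fin (n - (i:ℕ))) : Prop :=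
  ∀ i : Fin (n-1), ((i:ℕ) ∈ B ↔ n - 1 - (i:ℕ) ≤ (f i : ℕ) +
    (if h : (i:ℕ)+1 < n-1 then (f ⟨(i:ℕ)+1, h⟩ : ℕ) else 0))

lemma codeC3_next {n : ℕ} (σ : Equiv.Perm (Fin (n+1))) (i : Fin (n-1)) :
    (if h : (i:ℕ)+1 < n-1 then ((codeC3 σ ⟨(i:ℕ)+1, h⟩ : Fin _) : ℕ) else 0)
      = c3 σ ((i:ℕ)+1) := by
  split_ifs with h
  · rfl
  · have hv : (i:ℕ)+1 = n-1 := by have := i.isLt; omega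
    rw [hv, c3_last]

lemma codeChat_next {n : ℕ} (ω : Equiv.Perm (Fin n)) (i : Fin (n-1)) :
    (if h : (i:ℕ)+1 < n-1 then ((codeChat ω ⟨(i:ℕ)+1, h⟩ : Fin _) : ℕ) else 0)
      = chat ω ((i:ℕ)+1) := by
  split_ifs with h
  · rfl
  · have hv : (i:ℕ)+1 = n-1 := by have := i.isLt; omega
    rw [hv, chat_last]

lemma mem_D3_iff {n : ℕ} (σ : Equiv.Perm (Fin (n+1))) {i : ℕ} (hi : i < n - 1) :
    i ∈ D3 σ ↔ odd3 (ent σ i) (ent σ (i+1)) (ent σ (i+2)) := by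
  unfold D3
  rw [Finset.mem_filter, Finset.mem_range]
  exact and_iff_right (by omega)

lemma D3_subset {n : ℕ} (σ : Equiv.Perm (Fin (n+1))) : D3 σ ⊆ Finset.range (n-1) := by
  intro j hj
  unfold D3 at hj
  rw [Finset.mem_filter, Finset.mem_range] at hj
  rw [Finset.mem_range]
  omega

lemma mem_altD_iff {n : ℕ} (ω : Equiv.Perm (Fin n)) {i : ℕ} (hi : i < n - 1) :
    i ∈ altD ω ↔
      ((Even i ∧ ent ω (i+1) < ent ω i) ∨ (¬ Even i ∧ ent ω i < ent ω (i+1))) := by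
  unfold altD
  rw [Finset.mem_filter, Finset.mem_range]
  exact and_iff_right hi

lemma altD_subset {n : ℕ} (ω : Equiv.Perm (Fin n)) : altD ω ⊆ Finset.range (n-1) :=
  Finset.filter_subset _ _

lemma claimA {n : ℕ} (B : Finset ℕ) (hB : B ⊆ Finset.range (n - 1))
    (σ : Equiv.Perm (Fin (n+1))) : D3 σ = B ↔ codeCond n B (codeC3 σ) := by
  constructor
  · intro hDB i
    have hi := i.isLt
    rw [codeC3_next σ i]
    show (i:ℕ) ∈ B ↔ n - 1 - (i:ℕ) ≤ c3 σ (i:ℕ) + c3 σ ((i:ℕ)+1)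
    rw [← hDB, mem_D3_iff σ hi]
    exact c3_rule σ hi
  · intro hP
    ext j
    by_cases hj : j < n - 1
    · have hPj := hP ⟨j, hj⟩
      rw [codeC3_next σ ⟨j, hj⟩] at hPj
      rw [mem_D3_iff σ hj, c3_rule σ hj]
      exact hPj.symm
    · constructor
      · intro hmem
        exact absurd (Finset.mem_range.mp (D3_subset σ hmem)) hj
      · intro hmem
        exact absurd (Finset.mem_range.mp (hB hmem)) hj

lemma claimB {n : ℕ} (B : Finset ℕ) (hB : B ⊆ Finset.range (n - 1))
    (ω : Equiv.Perm (Fin n)) : altD ω = B ↔ codeCond n B (codeChat ω) := by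
  constructor
  · intro hDB i
    have hi := i.isLt
    rw [codeChat_next ω i]
    show (i:ℕ) ∈ B ↔ n - 1 - (i:ℕ) ≤ chat ω (i:ℕ) + chat ω ((i:ℕ)+1)
    rw [← hDB, mem_altD_iff ω hi]
    exact chat_rule ω hi
  · intro hP
    ext j
    by_cases hj : j < n - 1
    · have hPj := hP ⟨j, hj⟩
      rw [codeChat_next ω ⟨j, hj⟩] at hPj
      rw [mem_altD_iff ω hj, chat_rule ω hj]
      exact hPj.symm
    · constructor
      · intro hmem
        exact absurd (Finset.mem_range.mp (altD_subset ω hmem)) hj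
      · intro hmem
        exact absurd (Finset.mem_range.mp (hB hmem)) hj

lemma cardA {n : ℕ} (B : Finset ℕ) (hB : B ⊆ Finset.range (n - 1)) :
    ((Finset.univ : Finset (Equiv.Perm (Fin (n + 1)))).filter
      (fun σ => σ 0 = 0 ∧ D3 σ = B)).card
    = ((Finset.univ : Finset (∀ i : Fin (n-1), Fin (n - (i:ℕ)))).filter
        (codeCond n B)).card := by
  classical
  set S1 := (Finset.univ : Finset (Equiv.Perm (Fin (n + 1)))).filter (fun σ => σ 0 = 0) with hS1
  have hinj1 : Set.InjOn (codeC3 (n := n)) ↑S1 := by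
    intro σ hσ σ' hσ' he
    rw [Finset.mem_coe, hS1, Finset.mem_filter] at hσ hσ'
    apply c3_inj σ σ' hσ.2 hσ'.2
    intro i hi
    exact congrArg Fin.val (congrFun he ⟨i, hi⟩)
  have himg1 : S1.image codeC3 = Finset.univ := by
    apply Finset.eq_univ_of_card
    rw [Finset.card_image_of_injOn hinj1, hS1, card_fix0 n, card_pi_fact n]
  have hL : (Finset.univ : Finset (Equiv.Perm (Fin (n + 1)))).filter
      (fun σ => σ 0 = 0 ∧ D3 σ = B) = S1.filter (fun σ => D3 σ = B) := by
    rw [hS1, Finset.filter_filter]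
  rw [hL]
  have e1 : (S1.filter (fun σ => D3 σ = B)).card
      = ((S1.filter (fun σ => D3 σ = B)).image codeC3).card :=
    (Finset.card_image_of_injOn (hinj1.mono (by
      intro x hx
      rw [Finset.mem_coe, Finset.mem_filter] at hx
      rw [Finset.mem_coe]
      exact hx.1))).symm
  rw [e1]
  congr 1
  ext f
  simp only [Finset.mem_image, Finset.mem_filter, Finset.mem_univ, true_and]
  constructor
  · rintro ⟨σ, hσ, rfl⟩
    rw [Finset.mem_filter] at hσ
    exact (claimA B hB σ).mp hσ.2
  · intro hPf
    have hfu : f ∈ S1.image codeC3 := by rw [himg1]; exact Finset.mem_univ f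
    obtain ⟨σ, hσ, rfl⟩ := Finset.mem_image.mp hfu
    exact ⟨σ, ⟨hσ, (claimA B hB σ).mpr hPf⟩, rfl⟩

lemma cardB {n : ℕ} (B : Finset ℕ) (hB : B ⊆ Finset.range (n - 1)) :
    ((Finset.univ : Finset (Equiv.Perm (Fin n))).filter (fun ω => altD ω = B)).card
    = ((Finset.univ : Finset (∀ i : Fin (n-1), Fin (n - (i:ℕ)))).filter
        (codeCond n B)).card := by
  classical
  have hinj2 : Function.Injective (codeChat (n := n)) := by
    intro ω ω' he
    apply chat_inj ω ω'
    intro i hi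
    exact congrArg Fin.val (congrFun he ⟨i, hi⟩)
  have himg2 : (Finset.univ : Finset (Equiv.Perm (Fin n))).image codeChat = Finset.univ := by
    apply Finset.eq_univ_of_card
    rw [Finset.card_image_of_injective _ hinj2, Finset.card_univ, card_pi_fact n]
    simp [Fintype.card_perm]
  have e1 : ((Finset.univ : Finset (Equiv.Perm (Fin n))).filter (fun ω => altD ω = B)).card
      = (((Finset.univ : Finset (Equiv.Perm (Fin n))).filter
          (fun ω => altD ω = B)).image codeChat).card :=
    (Finset.card_image_of_injective _ hinj2).symm
  rw [e1]
  congr 1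
  ext f
  simp only [Finset.mem_image, Finset.mem_filter, Finset.mem_univ, true_and]
  constructor
  · rintro ⟨ω, hω, rfl⟩
    exact (claimB B hB ω).mp hω
  · intro hPf
    have hfu : f ∈ (Finset.univ : Finset (Equiv.Perm (Fin n))).image codeChat := by
      rw [himg2]; exact Finset.mem_univ f
    obtain ⟨ω, hω, rfl⟩ := Finset.mem_image.mp hfu
    exact ⟨ω, (claimB B hB ω).mpr hPf, rfl⟩

end Aux6

theorem stmt2 (n : ℕ) (B : Finset ℕ) (hB : B ⊆ Finset.range (n - 1)) :
    ((Finset.univ : Finset (Equiv.Perm (Fin (n + 1)))).filter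
      (fun σ => σ 0 = 0 ∧ D3 σ = B)).card =
    ((Finset.univ : Finset (Equiv.Perm (Fin n))).filter
      (fun ω => altD ω = B)).card := by
  rw [cardA B hB, cardB B hB]
end

section
/- The number of permutations of [n+1] with no 3-descents equals (n+1)·Eₙ, where Eₙ is the number of up-down alternating permutations of [n]. -/
/-!
Both sides are counted through the codes `f` with `fᵢ < n - i`. A permutation `σ` of `[n+1]` is
determined by `σ₀` and the code `c³(σ)`: `c³ᵢ` is the rank of `σᵢ₊₁` among the later entries in the
cyclic order of values starting at `σᵢ`, which is what oddness of `σᵢσᵢ₊₁σⱼ` says. Likewise `τ ∈ Sₙ`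
is determined by its alternating Lehmer code `ĉ(τ)`. In both cases the local condition (no
3-descent at `i`, resp. `τ` alternating at `i`) becomes `fᵢ + fᵢ₊₁ ≤ n - i - 2`, because two
consecutive arcs of values either cover the remaining values or are disjoint.
-/

open Finset
open scoped Classical

open Equiv

lemma eq_of_card_filter_lt_eq {α β : Type*} [LinearOrder β] {key : α → β}
    (hkey : Function.Injective key) {s : Finset α} {b b' : α} (hb : b ∈ s) (hb' : b' ∈ s)
    (h : #(s.filter fun v => key v < key b) = #(s.filter fun v => key v < key b')) : b = b' := by
  have mono : ∀ {x y}, x ∈ s → key x < key y →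
      #(s.filter fun v => key v < key x) < #(s.filter fun v => key v < key y) := by
    intro x y hx hxy
    refine card_lt_card ⟨monotone_filter_right s fun _ _ hv => hv.trans hxy, fun hsub => ?_⟩
    exact lt_irrefl _ (mem_filter.1 (hsub (mem_filter.2 ⟨hx, hxy⟩))).2
  rcases lt_trichotomy (key b) (key b') with hlt | heq | hgt
  · exact absurd h (mono hb hlt).ne
  · exact hkey heq
  · exact absurd h (mono hb' hgt).ne'

lemma card_le_card_filter_add_card_filter_iff {α : Type*} {U : Finset α} {p q : α → Prop}
    [DecidablePred p] [DecidablePred q] {y : α} (hy : y ∈ U) (hqy : ¬ q y)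
    (hcover : p y → ∀ v ∈ U, p v ∨ q v) (hdisj : ¬ p y → ∀ v ∈ U, p v → ¬ q v) :
    #U ≤ #(U.filter p) + #(U.filter q) ↔ p y := by
  refine ⟨fun hle => by_contra fun hpy => ?_, fun hpy => ?_⟩
  · have hsub : U.filter p ∪ U.filter q ⊆ U.erase y := by
      intro v hv
      rcases mem_union.1 hv with hv | hv <;> obtain ⟨hvU, hv⟩ := mem_filter.1 hv
      exacts [mem_erase.2 ⟨by rintro rfl; exact hpy hv, hvU⟩,
        mem_erase.2 ⟨by rintro rfl; exact hqy hv, hvU⟩]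
    have hd : Disjoint (U.filter p) (U.filter q) :=
      disjoint_filter.2 fun v hv => hdisj hpy v hv
    have := card_le_card hsub
    rw [card_union_of_disjoint hd, card_erase_of_mem hy] at this
    have : 0 < #U := card_pos.2 ⟨y, hy⟩
    omega
  · calc #U ≤ #(U.filter p ∪ U.filter q) :=
          card_le_card fun v hv => by simpa [mem_union, mem_filter, hv] using hcover hpy v hv
      _ ≤ #(U.filter p) + #(U.filter q) := card_union_le _ _

lemma card_filter_comp_eq_of_injective {α β : Type*} [Fintype α] {f : α → β}
    (hf : Function.Injective f) {s : Finset β} (hmaps : ∀ a, f a ∈ s)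
    (hcard : #s ≤ Fintype.card α) (Q : β → Prop) [DecidablePred Q] :
    #(univ.filter fun a => Q (f a)) = #(s.filter Q) := by
  have himage : univ.image f = s := eq_of_subset_of_card_le (by simpa [subset_iff] using hmaps)
    (by rwa [card_image_of_injective _ hf, card_univ])
  rw [← himage, filter_image, card_image_of_injective _ hf]

/-- The cyclic order of the values that starts at `a`: first `a, a + 1, …`, then `0, …, a - 1`. -/
def cycKey (a v : ℕ) : ℕ ×ₗ ℕ := toLex (if v < a then 1 else 0, v)

lemma cycKey_injective (a : ℕ) : Function.Injective (cycKey a) := by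
  intro v w h
  simpa [cycKey] using congrArg (fun x => (ofLex x).2) h

lemma odd3_iff_cycKey_lt (a b v : ℕ) : odd3 a b v ↔ cycKey a v < cycKey a b := by
  unfold odd3 cycKey
  rw [Prod.Lex.toLex_lt_toLex]
  split_ifs <;> simp <;> omega

lemma not_odd3_self (a b : ℕ) : ¬ odd3 a b b := by
  simp [odd3_iff_cycKey_lt]

-- If `c` lies on the cyclic arc `(a, b)`, the arcs `(a, b)` and `(b, c)` cover all values;
-- otherwise they are disjoint.
lemma odd3_or_odd3_of_odd3 {a b c : ℕ} (h : odd3 a b c) (v : ℕ) : odd3 a b v ∨ odd3 b c v := by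
  unfold odd3 at *; split_ifs at * <;> omega

lemma not_odd3_of_not_odd3 {a b c v : ℕ} (h : ¬ odd3 a b c) (hv : odd3 a b v) :
    ¬ odd3 b c v := by
  unfold odd3 at *; split_ifs at * <;> omega

def altKey (i v : ℕ) : ℤ := if Even i then v else -v

lemma altKey_injective (i : ℕ) : Function.Injective (altKey i) := by
  intro v w h
  unfold altKey at h
  split_ifs at h <;> omega

lemma altKey_lt_altKey_iff {i v w : ℕ} :
    altKey i v < altKey i w ↔ (Even i ∧ v < w) ∨ (¬ Even i ∧ w < v) := by
  unfold altKey; split_ifs with h <;> simp [h]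

lemma altKey_succ (i v : ℕ) : altKey (i + 1) v = - altKey i v := by
  unfold altKey; by_cases h : Even i <;> simp [h, Nat.even_add_one]

namespace Equiv.Perm

variable {m : ℕ} (σ : Perm (Fin m))

lemma ent_lt {i : ℕ} (h : i < m) : ent σ i < m := by
  simp [ent, h]

lemma eq_of_ent_eq {i j : ℕ} (hi : i < m) (hj : j < m) (h : ent σ i = ent σ j) : i = j := by
  simpa [ent, hi, hj, Fin.val_inj] using h

lemma exists_ent_eq {v : ℕ} (hv : v < m) : ∃ j < m, ent σ j = v :=
  ⟨σ.symm ⟨v, hv⟩, (σ.symm ⟨v, hv⟩).2, by simp [ent]⟩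

lemma ext_of_ent_of_prefix {σ σ' : Perm (Fin m)}
    (h : ∀ i < m, (∀ j < i, ent σ j = ent σ' j) → ent σ i = ent σ' i) : σ = σ' := by
  have hent : ∀ i < m, ent σ i = ent σ' i := fun i =>
    Nat.strong_induction_on i fun i ih hi => h i hi fun j hj => ih j hj (by omega)
  ext x
  simpa [ent, x.2] using hent x x.2

def tailValues (i : ℕ) : Finset ℕ := (range m).filter fun v => ∀ j < i, ent σ j ≠ v

lemma mem_tailValues {i v : ℕ} : v ∈ σ.tailValues i ↔ ∃ j, i ≤ j ∧ j < m ∧ ent σ j = v := by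
  constructor
  · intro hv
    simp only [tailValues, mem_filter, mem_range] at hv
    obtain ⟨j, hj, rfl⟩ := σ.exists_ent_eq hv.1
    exact ⟨j, not_lt.1 fun hji => hv.2 j hji rfl, hj, rfl⟩
  · rintro ⟨j, hij, hj, rfl⟩
    simp only [tailValues, mem_filter, mem_range]
    exact ⟨σ.ent_lt hj, fun k hk he => by have := σ.eq_of_ent_eq (by omega) hj he; omega⟩

lemma ent_mem_tailValues {i : ℕ} (hi : i < m) : ent σ i ∈ σ.tailValues i :=
  σ.mem_tailValues.2 ⟨i, le_rfl, hi, rfl⟩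

lemma tailValues_succ (i : ℕ) : σ.tailValues (i + 1) = (σ.tailValues i).erase (ent σ i) := by
  ext v
  simp only [tailValues, mem_erase, mem_filter, Nat.lt_succ_iff_lt_or_eq]
  grind

lemma card_tailValues {i : ℕ} (h : i ≤ m) : #(σ.tailValues i) = m - i := by
  induction i with
  | zero => simp [tailValues]
  | succ i ih =>
    rw [tailValues_succ, card_erase_of_mem (σ.ent_mem_tailValues h), ih (by omega)]
    omega

lemma tailValues_congr {σ σ' : Perm (Fin m)} {i : ℕ} (h : ∀ j < i, ent σ j = ent σ' j) :
    σ.tailValues i = σ'.tailValues i := by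
  ext v
  simp +contextual [tailValues, h]

section lehmer

variable {β : Type*} [LinearOrder β] (key : ℕ → β)

def lehmer (i : ℕ) : ℕ := #((range m).filter fun j => i < j ∧ key (ent σ j) < key (ent σ i))

lemma lehmer_eq_card_filter_tailValues_succ (i : ℕ) :
    σ.lehmer key i = #((σ.tailValues (i + 1)).filter fun v => key v < key (ent σ i)) := by
  refine card_bij (fun j _ => ent σ j) (fun j hj => ?_) (fun j hj j' hj' he => ?_) fun v hv => ?_
  · simp only [mem_filter, mem_range] at hj ⊢
    exact ⟨σ.mem_tailValues.2 ⟨j, hj.2.1, hj.1, rfl⟩, hj.2.2⟩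
  · simp only [mem_filter, mem_range] at hj hj'
    exact σ.eq_of_ent_eq hj.1 hj'.1 he
  · obtain ⟨hv, hlt⟩ := mem_filter.1 hv
    obtain ⟨j, hij, hj, rfl⟩ := σ.mem_tailValues.1 hv
    exact ⟨j, mem_filter.2 ⟨mem_range.2 hj, hij, hlt⟩, rfl⟩

lemma lehmer_eq_card_filter_tailValues (i : ℕ) :
    σ.lehmer key i = #((σ.tailValues i).filter fun v => key v < key (ent σ i)) := by
  rw [lehmer_eq_card_filter_tailValues_succ, tailValues_succ, filter_erase,
    erase_eq_of_notMem (by simp)]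

lemma lehmer_add_lt {i : ℕ} (hi : i < m) : σ.lehmer key i + i < m := by
  have := card_filter_le (σ.tailValues (i + 1)) fun v => key v < key (ent σ i)
  rw [← lehmer_eq_card_filter_tailValues_succ, card_tailValues _ hi] at this
  omega

variable {σ key} in
lemma ent_eq_of_lehmer_eq {σ' : Perm (Fin m)} (hkey : Function.Injective key)
    {i : ℕ} (hi : i < m) (hpre : ∀ j < i, ent σ j = ent σ' j)
    (h : σ.lehmer key i = σ'.lehmer key i) : ent σ i = ent σ' i := by
  rw [lehmer_eq_card_filter_tailValues, lehmer_eq_card_filter_tailValues,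
    ← tailValues_congr hpre] at h
  exact eq_of_card_filter_lt_eq hkey (σ.ent_mem_tailValues hi)
    (tailValues_congr hpre ▸ σ'.ent_mem_tailValues hi) h

end lehmer

lemma c3_eq_lehmer (i : ℕ) : c3 σ i = σ.lehmer (cycKey (ent σ i)) (i + 1) := by
  simp only [c3, lehmer, odd3_iff_cycKey_lt]

lemma chat_eq_lehmer (i : ℕ) : chat σ i = σ.lehmer (altKey i) i := by
  simp only [chat, lehmer, altKey_lt_altKey_iff]

lemma odd3_iff_le_c3_add_c3 {i : ℕ} (hi : i + 2 < m) :
    odd3 (ent σ i) (ent σ (i + 1)) (ent σ (i + 2)) ↔ m ≤ c3 σ i + c3 σ (i + 1) + (i + 2) := by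
  have key := card_le_card_filter_add_card_filter_iff (σ.ent_mem_tailValues hi)
    (p := fun v => odd3 (ent σ i) (ent σ (i + 1)) v)
    (q := fun v => odd3 (ent σ (i + 1)) (ent σ (i + 2)) v) (not_odd3_self _ _)
    (fun h v _ => odd3_or_odd3_of_odd3 h v) (fun h _ _ => not_odd3_of_not_odd3 h)
  rw [c3_eq_lehmer, c3_eq_lehmer, lehmer_eq_card_filter_tailValues_succ,
    lehmer_eq_card_filter_tailValues, show i + 1 + 1 = i + 2 from rfl]
  simp only [← odd3_iff_cycKey_lt]
  rw [← key, card_tailValues _ hi.le]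
  omega

lemma altKey_lt_iff_le_chat_add_chat {i : ℕ} (hi : i + 1 < m) :
    altKey i (ent σ (i + 1)) < altKey i (ent σ i) ↔ m ≤ chat σ i + chat σ (i + 1) + (i + 1) := by
  have key := card_le_card_filter_add_card_filter_iff (σ.ent_mem_tailValues hi)
    (p := fun v => altKey i v < altKey i (ent σ i))
    (q := fun v => altKey i (ent σ (i + 1)) < altKey i v) (lt_irrefl _)
    (fun h _ _ => (lt_or_ge _ _).imp_right h.trans_le) (fun h _ _ hv hv' => h (hv'.trans hv))
  rw [chat_eq_lehmer, chat_eq_lehmer, lehmer_eq_card_filter_tailValues_succ,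
    lehmer_eq_card_filter_tailValues]
  simp only [altKey_succ, neg_lt_neg_iff]
  rw [← key, card_tailValues _ hi.le]
  omega

end Equiv.Perm

def AdjacentSumBounded (n : ℕ) (f : Fin n → ℕ) : Prop :=
  ∀ i (h : i + 1 < n), f ⟨i, by omega⟩ + f ⟨i + 1, h⟩ + i + 2 ≤ n

lemma upDown_iff_adjacentSumBounded {n : ℕ} (τ : Perm (Fin n)) :
    UpDown τ ↔ AdjacentSumBounded n fun i => chat τ i := by
  have step : ∀ i, i + 1 < n → (((Even i ∧ ent τ i < ent τ (i + 1)) ∨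
      (¬ Even i ∧ ent τ (i + 1) < ent τ i)) ↔ chat τ i + chat τ (i + 1) + i + 2 ≤ n) := by
    intro i hi
    have hne : altKey i (ent τ (i + 1)) ≠ altKey i (ent τ i) :=
      (altKey_injective i).ne fun h => by have := τ.eq_of_ent_eq hi (by omega) h; omega
    rw [← altKey_lt_altKey_iff, lt_iff_not_ge, hne.le_iff_lt, τ.altKey_lt_iff_le_chat_add_chat hi]
    omega
  simp only [UpDown, AdjacentSumBounded, mem_range]
  exact forall_congr' fun i =>
    ⟨fun h hi => (step i hi).1 (h (by omega)), fun h hi => (step i (by omega)).2 (h (by omega))⟩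

lemma D3_eq_empty_iff_adjacentSumBounded {n : ℕ} (σ : Perm (Fin (n + 1))) :
    D3 σ = ∅ ↔ AdjacentSumBounded n fun i => c3 σ i := by
  have step : ∀ i, i + 1 < n →
      (¬ odd3 (ent σ i) (ent σ (i + 1)) (ent σ (i + 2)) ↔ c3 σ i + c3 σ (i + 1) + i + 2 ≤ n) := by
    intro i hi
    rw [σ.odd3_iff_le_c3_add_c3 (by omega)]
    omega
  simp only [D3, filter_eq_empty_iff, AdjacentSumBounded, mem_range]
  exact forall_congr' fun i =>
    ⟨fun h hi => (step i hi).1 (h (by omega)), fun h hi => (step i (by omega)).2 (h (by omega))⟩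

def lehmerCodes (n : ℕ) : Finset (Fin n → ℕ) := Fintype.piFinset fun i => range (n - i)

lemma card_lehmerCodes (n : ℕ) : #(lehmerCodes n) = n.factorial := by
  rw [lehmerCodes, Fintype.card_piFinset]
  simp only [card_range]
  rw [Fin.prod_univ_eq_prod_range (fun i => n - i) n, ← prod_range_add_one_eq_factorial,
    ← prod_range_reflect]
  exact prod_congr rfl fun i hi => by rw [mem_range] at hi; omega

lemma eulerNum_eq_card_filter_lehmerCodes (n : ℕ) :
    EulerNum n = #((lehmerCodes n).filter (AdjacentSumBounded n)) := by
  have hinj : Function.Injective fun (τ : Perm (Fin n)) (i : Fin n) => chat τ i := by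
    refine fun τ τ' h => Perm.ext_of_ent_of_prefix fun i hi hpre => ?_
    refine Perm.ent_eq_of_lehmer_eq (altKey_injective i) hi hpre ?_
    simpa only [Perm.chat_eq_lehmer] using congrFun h ⟨i, hi⟩
  have hmaps : ∀ τ : Perm (Fin n), (fun i : Fin n => chat τ i) ∈ lehmerCodes n := fun τ => by
    simp only [lehmerCodes, Fintype.mem_piFinset, mem_range, Perm.chat_eq_lehmer]
    exact fun i => by have := τ.lehmer_add_lt (altKey i) i.2; omega
  rw [← card_filter_comp_eq_of_injective hinj hmaps (by simp [card_lehmerCodes, Fintype.card_perm])]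
  simp only [← upDown_iff_adjacentSumBounded]
  rfl

lemma card_filter_D3_eq_empty (n : ℕ) :
    #(univ.filter fun σ : Perm (Fin (n + 1)) => D3 σ = ∅) =
      (n + 1) * #((lehmerCodes n).filter (AdjacentSumBounded n)) := by
  have hinj : Function.Injective
      fun σ : Perm (Fin (n + 1)) => (σ 0, fun i : Fin n => c3 σ i) := by
    refine fun σ σ' h => Perm.ext_of_ent_of_prefix fun i hi hpre => ?_
    rcases i with _ | k
    · have h0 : σ 0 = σ' 0 := congrArg Prod.fst h
      simp [ent, h0]
    · refine Perm.ent_eq_of_lehmer_eq (cycKey_injective (ent σ k)) hi hpre ?_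
      have := congrFun (congrArg Prod.snd h) ⟨k, by omega⟩
      simpa only [Perm.c3_eq_lehmer, hpre k (by omega)] using this
  have hmaps : ∀ σ : Perm (Fin (n + 1)),
      (σ 0, fun i : Fin n => c3 σ i) ∈ univ ×ˢ lehmerCodes n := fun σ => by
    simp only [mem_product, mem_univ, true_and, lehmerCodes, Fintype.mem_piFinset, mem_range,
      Perm.c3_eq_lehmer]
    intro i
    have := σ.lehmer_add_lt (cycKey (ent σ i)) (show (i : ℕ) + 1 < n + 1 by omega)
    omega
  have hcard : #((univ : Finset (Fin (n + 1))) ×ˢ lehmerCodes n) ≤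
      Fintype.card (Perm (Fin (n + 1))) := by
    rw [card_product, card_univ, Fintype.card_fin, card_lehmerCodes, Fintype.card_perm,
      Fintype.card_fin, Nat.factorial_succ]
  calc #(univ.filter fun σ : Perm (Fin (n + 1)) => D3 σ = ∅)
      = #(univ.filter fun σ : Perm (Fin (n + 1)) => AdjacentSumBounded n fun i => c3 σ i) := by
        simp only [D3_eq_empty_iff_adjacentSumBounded]
    _ = #((univ ×ˢ lehmerCodes n).filter
        fun p : Fin (n + 1) × (Fin n → ℕ) => AdjacentSumBounded n p.2) :=
        card_filter_comp_eq_of_injective hinj hmaps hcard fun p => AdjacentSumBounded n p.2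
    _ = (n + 1) * #((lehmerCodes n).filter (AdjacentSumBounded n)) := by
        rw [filter_product_right (AdjacentSumBounded n), card_product, card_univ,
          Fintype.card_fin]

theorem stmt4 (n : ℕ) :
    ((Finset.univ : Finset (Equiv.Perm (Fin (n + 1)))).filter
      (fun σ => D3 σ = (∅ : Finset ℕ))).card = (n + 1) * EulerNum n := by
  rw [eulerNum_eq_card_filter_lehmerCodes, card_filter_D3_eq_empty]
end
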